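/- Let Λ₁ and Λ₂ be integral lattices. Any isomorphism of ρ-invariants φ : (C(Λ₁), ρ₁) → (C(Λ₂), ρ₂) induces an isomorphism of discriminant forms: the group isomorphism φ : Λ̄₁ → Λ̄₂ underlying the torsor isomorphism satisfies b₂(φ(x̄), φ(ȳ)) = b₁(x̄, ȳ) for all x̄, ȳ ∈ Λ̄₁. -/

import Mathlib

/-!
Fix a characteristic covector `χ`. On the dual lattice, `q_χ(a) = ⟨χ,a⟩ + |a|`, which equals
`(|χ + 2a| - |χ|) / 4`, is modulo 2 a quadratic refinement of the discriminant form: it is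
unchanged mod 2 by adding lattice vectors, and `q_χ(a + a') = q_χ(a) + q_χ(a') + 2⟨a,a'⟩`.
An isomorphism of ρ-invariants sends `χ + 2a` to `Φ χ + 2b` with `b̄ = ψ(ā)`, so comparing `ρ`
at `χ` and at `χ + 2a` gives `q_{Φχ}(b) ≡ q_χ(a) (mod 2)`. Polarizing yields
`2⟨b,b'⟩ ≡ 2⟨a,a'⟩ (mod 2)`.
-/

set_option linter.unusedSectionVars false

open Matrix BigOperators

namespace Greene

/-- A rational number is an integer. -/
def isInt (q : ℚ) : Prop := ∃ m : ℤ, q = (m : ℚ)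

section LatticeDefs

variable {ι : Type} [Fintype ι] [DecidableEq ι]
variable {ι' : Type} [Fintype ι'] [DecidableEq ι']

/-- The bilinear form on `ι → ℚ` with (integral) Gram matrix `B`. -/
def qform (B : Matrix ι ι ℤ) (x y : ι → ℚ) : ℚ :=
  x ⬝ᵥ ((B.map (Int.cast : ℤ → ℚ)) *ᵥ y)

/-- The set of integer vectors: the standard lattice inside `ι → ℚ`. -/
def intVecs (ι : Type) [Fintype ι] [DecidableEq ι] : Set (ι → ℚ) :=
  {x | ∀ i, isInt (x i)}

lemma qform_zero_left (B : Matrix ι ι ℤ) (y : ι → ℚ) : qform B 0 y = 0 :=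
  zero_dotProduct _

lemma qform_add_left (B : Matrix ι ι ℤ) (x x' y : ι → ℚ) :
    qform B (x + x') y = qform B x y + qform B x' y := add_dotProduct _ _ _

lemma qform_neg_left (B : Matrix ι ι ℤ) (x y : ι → ℚ) :
    qform B (-x) y = -qform B x y := neg_dotProduct _ _

/-- The dual lattice `S* = {x ∈ span_ℚ S | ⟨x,y⟩ ∈ ℤ for all y ∈ S}`. -/
def dualOf (B : Matrix ι ι ℤ) (S : Set (ι → ℚ)) : AddSubgroup (ι → ℚ) where
  carrier := {x | x ∈ Submodule.span ℚ S ∧ ∀ y ∈ S, isInt (qform B x y)}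
  zero_mem' := ⟨Submodule.zero_mem _, fun y _ => ⟨0, by simp [qform_zero_left]⟩⟩
  add_mem' := by
    intro a b ha hb
    refine ⟨Submodule.add_mem _ ha.1 hb.1, fun y hy => ?_⟩
    obtain ⟨m, hm⟩ := ha.2 y hy
    obtain ⟨m', hm'⟩ := hb.2 y hy
    exact ⟨m + m', by rw [qform_add_left, hm, hm']; push_cast; ring⟩
  neg_mem' := by
    intro a ha
    refine ⟨Submodule.neg_mem _ ha.1, fun y hy => ?_⟩
    obtain ⟨m, hm⟩ := ha.2 y hy
    exact ⟨-m, by rw [qform_neg_left, hm]; push_cast; ring⟩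

/-- Characteristic covectors: `χ ∈ S*` with `⟨χ,y⟩ ≡ ⟨y,y⟩ (mod 2)` for all `y ∈ S`. -/
def CharOf (B : Matrix ι ι ℤ) (S : Set (ι → ℚ)) : Set (ι → ℚ) :=
  {χ | χ ∈ dualOf B S ∧ ∀ y ∈ S, ∃ m : ℤ, qform B χ y - qform B y y = 2 * (m : ℚ)}

/-- Two covectors are in the same class mod `2S`. -/
def SameClass (S : Set (ι → ℚ)) (χ χ' : ι → ℚ) : Prop :=
  ∃ y ∈ S, χ' = χ + (2 : ℚ) • y

/-- Short characteristic covectors: minimal norm in their class mod `2S`. -/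
def ShortOf (B : Matrix ι ι ℤ) (S : Set (ι → ℚ)) : Set (ι → ℚ) :=
  {χ | χ ∈ CharOf B S ∧ ∀ χ' ∈ CharOf B S, SameClass S χ χ' → qform B χ χ ≤ qform B χ' χ'}

/-- Rank of a lattice: dimension of its rational span. -/
noncomputable def rkOf (S : Set (ι → ℚ)) : ℕ := Module.finrank ℚ (Submodule.span ℚ S)

/-- The lattice `S` sitting inside its dual. -/
def latIn (B : Matrix ι ι ℤ) (S : Set (ι → ℚ)) : AddSubgroup (dualOf B S) :=
  AddSubgroup.closure {x | (x : ι → ℚ) ∈ S}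

/-- The discriminant group `S*/S`. -/
def disc (B : Matrix ι ι ℤ) (S : Set (ι → ℚ)) : Type :=
  dualOf B S ⧸ latIn B S

noncomputable instance (B : Matrix ι ι ℤ) (S : Set (ι → ℚ)) : AddCommGroup (disc B S) :=
  inferInstanceAs (AddCommGroup (dualOf B S ⧸ latIn B S))

/-- The class of a dual vector in the discriminant group. -/
def dmk (B : Matrix ι ι ℤ) (S : Set (ι → ℚ)) {x : ι → ℚ} (hx : x ∈ dualOf B S) :
    disc B S := QuotientAddGroup.mk (⟨x, hx⟩ : dualOf B S)

/-- `S` is an additive subgroup (a sublattice, when contained in a lattice). -/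
def IsLat (S : Set (ι → ℚ)) : Prop :=
  (0 : ι → ℚ) ∈ S ∧ ∀ x ∈ S, ∀ y ∈ S, x - y ∈ S

/-- The form is integer valued on `S`. -/
def IntegralOn (B : Matrix ι ι ℤ) (S : Set (ι → ℚ)) : Prop :=
  ∀ x ∈ S, ∀ y ∈ S, isInt (qform B x y)

/-- Unimodularity: the dual lattice equals the lattice. -/
def UnimodularOn (B : Matrix ι ι ℤ) (S : Set (ι → ℚ)) : Prop :=
  ((dualOf B S : AddSubgroup (ι → ℚ)) : Set (ι → ℚ)) = S

/-- Positive definiteness of the form on the span of `S`. -/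
def PosDefOn (B : Matrix ι ι ℤ) (S : Set (ι → ℚ)) : Prop :=
  ∀ x ∈ Submodule.span ℚ S, x ≠ 0 → 0 < qform B x x

/-- Orthogonality of two sublattices. -/
def OrthogonalSets (B : Matrix ι ι ℤ) (S T : Set (ι → ℚ)) : Prop :=
  ∀ x ∈ S, ∀ y ∈ T, qform B x y = 0

/-- `S, T` are complementary sublattices of `L`: orthogonal with ranks summing to `rk L`. -/
noncomputable def ComplementaryIn (B : Matrix ι ι ℤ) (L S T : Set (ι → ℚ)) : Prop :=
  OrthogonalSets B S T ∧ rkOf S + rkOf T = rkOf L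

/-- `S ⊆ L` is a primitive sublattice: the restriction map `L* → S*` surjects. -/
def PrimitiveIn (B : Matrix ι ι ℤ) (L S : Set (ι → ℚ)) : Prop :=
  ∀ x ∈ dualOf B S, ∃ z ∈ dualOf B L, ∀ u ∈ S, qform B z u = qform B x u

/-- `s` is the signature of the form restricted to the span of `S` (Sylvester form). -/
def IsSignatureOf (B : Matrix ι ι ℤ) (S : Set (ι → ℚ)) (s : ℤ) : Prop :=
  ∃ (p q : ℕ) (v : Fin (p + q) → (ι → ℚ)),
    (∀ i, v i ∈ Submodule.span ℚ S) ∧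
    Submodule.span ℚ (Set.range v) = Submodule.span ℚ S ∧
    LinearIndependent ℚ v ∧
    (∀ i j, i ≠ j → qform B (v i) (v j) = 0) ∧
    (∀ i : Fin (p + q),
      if (i : ℕ) < p then 0 < qform B (v i) (v i) else qform B (v i) (v i) < 0) ∧
    s = (p : ℤ) - (q : ℤ)

/-- `S` admits an orthonormal basis of `n` elements, i.e. `S ≅ ℤⁿ`. -/
def HasOrthonormalBasis (B : Matrix ι ι ℤ) (S : Set (ι → ℚ)) (n : ℕ) : Prop :=
  ∃ v : Fin n → (ι → ℚ), (∀ i, v i ∈ S) ∧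
    (∀ i j, qform B (v i) (v j) = if i = j then 1 else 0) ∧
    (∀ x ∈ S, ∃ c : Fin n → ℤ, x = ∑ i, (c i : ℚ) • v i)

/-- Isomorphism of lattices: an additive bijection preserving the forms. -/
def LatIso (B : Matrix ι ι ℤ) (S : Set (ι → ℚ)) (B' : Matrix ι' ι' ℤ) (S' : Set (ι' → ℚ)) :
    Prop :=
  ∃ f : (ι → ℚ) → (ι' → ℚ), Set.BijOn f S S' ∧
    (∀ x ∈ S, ∀ y ∈ S, f (x + y) = f x + f y) ∧
    (∀ x ∈ S, ∀ y ∈ S, qform B' (f x) (f y) = qform B x y)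

/-- An isomorphism of the torsors `C(S₁) → C(S₂)` (given on representatives by `Φ`),
covering the group isomorphism `ψ` of discriminant groups. -/
def TorsorMapIso (B₁ : Matrix ι ι ℤ) (S₁ : Set (ι → ℚ))
    (B₂ : Matrix ι' ι' ℤ) (S₂ : Set (ι' → ℚ))
    (Φ : (ι → ℚ) → (ι' → ℚ)) (ψ : disc B₁ S₁ ≃+ disc B₂ S₂) : Prop :=
  (∀ χ ∈ CharOf B₁ S₁, Φ χ ∈ CharOf B₂ S₂) ∧
  (∀ χ ∈ CharOf B₁ S₁, ∀ χ' ∈ CharOf B₁ S₁,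
    (SameClass S₁ χ χ' ↔ SameClass S₂ (Φ χ) (Φ χ'))) ∧
  (∀ μ ∈ CharOf B₂ S₂, ∃ χ ∈ CharOf B₁ S₁, SameClass S₂ (Φ χ) μ) ∧
  (∀ χ ∈ CharOf B₁ S₁, ∀ χ' ∈ CharOf B₁ S₁,
    ∀ (x : ι → ℚ) (y : ι' → ℚ) (hx : x ∈ dualOf B₁ S₁) (hy : y ∈ dualOf B₂ S₂),
      χ' = χ + (2 : ℚ) • x → Φ χ' = Φ χ + (2 : ℚ) • y →
      ψ (dmk B₁ S₁ hx) = dmk B₂ S₂ hy)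

/-- Compatibility of `Φ` with the `d`-invariants: `d₂([Φ χ]) = ε · d₁([χ])`,
where `d` is the minimum of `(|χ'|² - rk)/4` over the class. -/
noncomputable def DCompat (B₁ : Matrix ι ι ℤ) (S₁ : Set (ι → ℚ))
    (B₂ : Matrix ι' ι' ℤ) (S₂ : Set (ι' → ℚ))
    (ε : ℚ) (Φ : (ι → ℚ) → (ι' → ℚ)) : Prop :=
  ∀ χ ∈ CharOf B₁ S₁, ∀ q : ℚ,
    IsLeast {t | ∃ χ' ∈ CharOf B₁ S₁, SameClass S₁ χ χ' ∧
      t = (qform B₁ χ' χ' - (rkOf S₁ : ℚ)) / 4} q →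
    IsLeast {t | ∃ μ ∈ CharOf B₂ S₂, SameClass S₂ (Φ χ) μ ∧
      t = (qform B₂ μ μ - (rkOf S₂ : ℚ)) / 4} (ε * q)

/-- Compatibility of `Φ` with the `ρ`-invariants: `ρ₂([Φ χ]) ≡ ε · ρ₁([χ]) (mod 2)`. -/
def RhoCompat (B₁ : Matrix ι ι ℤ) (S₁ : Set (ι → ℚ))
    (B₂ : Matrix ι' ι' ℤ) (S₂ : Set (ι' → ℚ))
    (ε : ℚ) (Φ : (ι → ℚ) → (ι' → ℚ)) : Prop :=
  ∀ χ ∈ CharOf B₁ S₁, ∀ s₁ s₂ : ℤ, IsSignatureOf B₁ S₁ s₁ → IsSignatureOf B₂ S₂ s₂ →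
    ∃ m : ℤ, (qform B₂ (Φ χ) (Φ χ) - (s₂ : ℚ)) / 4 - ε * ((qform B₁ χ χ - (s₁ : ℚ)) / 4)
      = 2 * (m : ℚ)

/-- The `d`-invariants `(C(S₁), d₁)` and `(C(S₂), ε·d₂)` are isomorphic. -/
noncomputable def DIso (B₁ : Matrix ι ι ℤ) (S₁ : Set (ι → ℚ))
    (B₂ : Matrix ι' ι' ℤ) (S₂ : Set (ι' → ℚ)) (ε : ℚ) : Prop :=
  ∃ (Φ : (ι → ℚ) → (ι' → ℚ)) (ψ : disc B₁ S₁ ≃+ disc B₂ S₂),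
    TorsorMapIso B₁ S₁ B₂ S₂ Φ ψ ∧ DCompat B₁ S₁ B₂ S₂ ε Φ

end LatticeDefs

/-- An abstract integral lattice, presented by its Gram matrix. -/
structure IntLattice where
  n : ℕ
  B : Matrix (Fin n) (Fin n) ℤ
  symm : B.IsSymm
  nondeg : B.det ≠ 0

/-- The Gram matrix of the orthogonal direct sum `Λ₁ ⊥ Λ₂`. -/
def glueGram (L₁ L₂ : IntLattice) :
    Matrix (Fin L₁.n ⊕ Fin L₂.n) (Fin L₁.n ⊕ Fin L₂.n) ℤ :=
  Matrix.fromBlocks L₁.B 0 0 L₂.B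

/-- The glue lattice `Λ₁ ⊕_ψ Λ₂ = {x + y ∈ Λ₁* ⊕ Λ₂* : ψ(x̄) = ȳ}`. -/
def glueSet (L₁ L₂ : IntLattice)
    (ψ : disc L₁.B (intVecs (Fin L₁.n)) ≃+ disc L₂.B (intVecs (Fin L₂.n))) :
    Set (Fin L₁.n ⊕ Fin L₂.n → ℚ) :=
  {w | ∃ (h₁ : (w ∘ Sum.inl) ∈ dualOf L₁.B (intVecs (Fin L₁.n)))
        (h₂ : (w ∘ Sum.inr) ∈ dualOf L₂.B (intVecs (Fin L₂.n))),
        ψ (dmk _ _ h₁) = dmk _ _ h₂}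

/-- `Λ₁` embedded in the first factor of `Λ₁* ⊕ Λ₂*`. -/
def inlLat (L₁ L₂ : IntLattice) : Set (Fin L₁.n ⊕ Fin L₂.n → ℚ) :=
  {w | (w ∘ Sum.inl) ∈ intVecs (Fin L₁.n) ∧ w ∘ Sum.inr = 0}

/-- `Λ₂` embedded in the second factor of `Λ₁* ⊕ Λ₂*`. -/
def inrLat (L₁ L₂ : IntLattice) : Set (Fin L₁.n ⊕ Fin L₂.n → ℚ) :=
  {w | (w ∘ Sum.inr) ∈ intVecs (Fin L₂.n) ∧ w ∘ Sum.inl = 0}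

/-- Stabilization `S ⊕ ℤᵏ`. -/
def stabSet {ι : Type} [Fintype ι] [DecidableEq ι] (S : Set (ι → ℚ)) (k : ℕ) :
    Set (ι ⊕ Fin k → ℚ) :=
  {w | (w ∘ Sum.inl) ∈ S ∧ ∀ j, isInt (w (Sum.inr j))}

/-- A finite loopless multigraph, with a reference orientation of each edge. -/
structure MultiGraph where
  nV : ℕ
  nE : ℕ
  hd : Fin nE → Fin nV
  tl : Fin nE → Fin nV
  loopless : ∀ e, hd e ≠ tl e

namespace MultiGraph

/-- The boundary map `C₁(G;ℚ) → C₀(G;ℚ)`, `∂ e = head(e) − tail(e)`. -/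
def bndry (G : MultiGraph) (x : Fin G.nE → ℚ) : Fin G.nV → ℚ :=
  fun v => ∑ e, x e * ((if G.hd e = v then 1 else 0) - (if G.tl e = v then 1 else 0))

/-- The flow lattice `ℱ(G) = ker ∂ ∩ C₁(G;ℤ)`. -/
def flowSet (G : MultiGraph) : Set (Fin G.nE → ℚ) :=
  {x | (∀ e, isInt (x e)) ∧ G.bndry x = 0}

/-- The cut lattice `𝒞(G) = im ∂* ∩ C₁(G;ℤ)`. -/
def cutSet (G : MultiGraph) : Set (Fin G.nE → ℚ) :=
  {x | (∀ e, isInt (x e)) ∧ ∃ g : Fin G.nV → ℚ, ∀ e, x e = g (G.hd e) - g (G.tl e)}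

/-- Reachability using only edges from the set `A`. -/
def ReachIn (G : MultiGraph) (A : Set (Fin G.nE)) : Fin G.nV → Fin G.nV → Prop :=
  Relation.ReflTransGen
    (fun u v => ∃ e ∈ A, (G.hd e = u ∧ G.tl e = v) ∨ (G.hd e = v ∧ G.tl e = u))

def Connected (G : MultiGraph) : Prop := ∀ u v, G.ReachIn Set.univ u v

/-- 2-edge-connectedness: connected, and removing any one edge leaves it connected. -/
def TwoEdgeConnected (G : MultiGraph) : Prop :=
  G.Connected ∧ ∀ e : Fin G.nE, ∀ u v, G.ReachIn {e}ᶜ u v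

/-- `C` is the edge set of a cycle of `G`. -/
def IsCycleEdgeSet (G : MultiGraph) (C : Set (Fin G.nE)) : Prop :=
  ∃ k : ℕ, 0 < k ∧ ∃ (e : Fin k → Fin G.nE) (v : Fin k → Fin G.nV),
    Function.Injective e ∧ Function.Injective v ∧ C = Set.range e ∧
    ∀ i, (G.hd (e i) = v (finRotate k i) ∧ G.tl (e i) = v i) ∨
         (G.tl (e i) = v (finRotate k i) ∧ G.hd (e i) = v i)

/-- A maximal spanning forest: acyclic and realizing all of `G`'s reachability. -/
def IsMaxForest (G : MultiGraph) (F : Finset (Fin G.nE)) : Prop :=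
  (∀ C, G.IsCycleEdgeSet C → ¬(C ⊆ (↑F : Set (Fin G.nE)))) ∧
  ∀ u v, G.ReachIn Set.univ u v → G.ReachIn (↑F) u v

open Classical in
/-- The fundamental cut vector of `e ∈ F`:
`+1` on edges leaving the component `K₁` of the tail of `e` in `F − e`,
`−1` on edges entering it, `0` otherwise. -/
noncomputable def cutVec (G : MultiGraph) (F : Finset (Fin G.nE)) (e : Fin G.nE) :
    Fin G.nE → ℚ := fun j =>
  (if G.ReachIn (↑(F.erase e)) (G.tl j) (G.tl e) then 1 else 0)
    - (if G.ReachIn (↑(F.erase e)) (G.hd j) (G.tl e) then 1 else 0)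

/-- `x` is the fundamental cycle vector of `e ∉ F`: the unique flow supported on
`F ∪ {e}` whose coefficient on `e` is `+1`. -/
def IsFundCycleVec (G : MultiGraph) (F : Finset (Fin G.nE)) (e : Fin G.nE)
    (x : Fin G.nE → ℚ) : Prop :=
  G.bndry x = 0 ∧ (∀ j, j ∉ F → j ≠ e → x j = 0) ∧ x e = 1

/-- Reorienting the edges of `G`: `o e = true` keeps the reference direction. -/
def reorient (G : MultiGraph) (o : Fin G.nE → Bool) : MultiGraph :=
  { G with
    hd := fun e => if o e then G.hd e else G.tl e
    tl := fun e => if o e then G.tl e else G.hd e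
    loopless := by
      intro e
      by_cases h : o e = true
      · simpa [h] using G.loopless e
      · simpa [h] using (G.loopless e).symm }

end MultiGraph

/-- A 2-isomorphism: a bijection of edge sets preserving edge sets of cycles. -/
def TwoIsomorphic (G G' : MultiGraph) : Prop :=
  ∃ σ : Fin G.nE ≃ Fin G'.nE, ∀ C, G.IsCycleEdgeSet C ↔ G'.IsCycleEdgeSet (σ '' C)

section QForm

variable {ι : Type} [Fintype ι] [DecidableEq ι] (B : Matrix ι ι ℤ)

lemma qform_add_right (x y y' : ι → ℚ) :
    qform B x (y + y') = qform B x y + qform B x y' := by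
  rw [qform, mulVec_add, dotProduct_add]; rfl

lemma qform_smul_left (c : ℚ) (x y : ι → ℚ) : qform B (c • x) y = c * qform B x y :=
  smul_dotProduct c x _

lemma qform_smul_right (c : ℚ) (x y : ι → ℚ) : qform B x (c • y) = c * qform B x y := by
  rw [qform, mulVec_smul, dotProduct_smul, smul_eq_mul]; rfl

lemma qform_sub_left (x x' y : ι → ℚ) : qform B (x - x') y = qform B x y - qform B x' y :=
  sub_dotProduct _ _ _

variable {B}

lemma qform_comm (hB : B.IsSymm) (x y : ι → ℚ) : qform B x y = qform B y x := by
  rw [qform, qform, dotProduct_mulVec, ← mulVec_transpose,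
    (hB.map (Int.cast : ℤ → ℚ) : _ᵀ = _), dotProduct_comm]

end QForm

def evenInts : AddSubgroup ℚ := AddSubgroup.zmultiples 2

lemma mem_evenInts_iff {q : ℚ} : q ∈ evenInts ↔ ∃ m : ℤ, q = 2 * m := by
  simp only [evenInts, AddSubgroup.mem_zmultiples_iff, zsmul_eq_mul, eq_comm, mul_comm]

lemma two_mul_mem_evenInts {q : ℚ} (hq : isInt q) : 2 * q ∈ evenInts := by
  obtain ⟨m, rfl⟩ := hq
  exact mem_evenInts_iff.mpr ⟨m, rfl⟩

lemma isInt_of_two_mul_mem_evenInts {q : ℚ} (hq : 2 * q ∈ evenInts) : isInt q := by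
  obtain ⟨m, hm⟩ := mem_evenInts_iff.mp hq
  exact ⟨m, by linarith⟩

section Lattice

variable {ι : Type} [Fintype ι] [DecidableEq ι] {B : Matrix ι ι ℤ} {S : Set (ι → ℚ)}

lemma IsLat.neg_mem (hS : IsLat S) {x : ι → ℚ} (hx : x ∈ S) : -x ∈ S := by
  simpa using hS.2 0 hS.1 x hx

lemma IsLat.add_mem (hS : IsLat S) {x y : ι → ℚ} (hx : x ∈ S) (hy : y ∈ S) : x + y ∈ S := by
  simpa using hS.2 x hx (-y) (hS.neg_mem hy)

lemma IsLat.sub_mem_of_dmk_eq (hS : IsLat S) {x y : ι → ℚ} (hx : x ∈ dualOf B S)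
    (hy : y ∈ dualOf B S) (h : dmk B S hx = dmk B S hy) : y - x ∈ S := by
  have hmem := QuotientAddGroup.eq.mp h
  rw [neg_add_eq_sub] at hmem
  exact AddSubgroup.closure_induction (k := {z : dualOf B S | (z : ι → ℚ) ∈ S})
    (p := fun z _ => (z : ι → ℚ) ∈ S) (fun _ hz => hz) hS.1
    (fun _ _ _ _ => hS.add_mem) (fun _ _ => hS.neg_mem) hmem

lemma mem_charOf_iff {χ : ι → ℚ} :
    χ ∈ CharOf B S ↔ χ ∈ dualOf B S ∧ ∀ y ∈ S, qform B χ y - qform B y y ∈ evenInts := by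
  simp only [mem_evenInts_iff]; rfl

lemma add_two_smul_mem_charOf {χ a : ι → ℚ} (hχ : χ ∈ CharOf B S) (ha : a ∈ dualOf B S) :
    χ + (2 : ℚ) • a ∈ CharOf B S := by
  rw [mem_charOf_iff] at hχ ⊢
  refine ⟨add_mem hχ.1 (two_smul ℚ a ▸ add_mem ha ha), fun y hy => ?_⟩
  have hshift : qform B (χ + (2 : ℚ) • a) y - qform B y y
      = (qform B χ y - qform B y y) + 2 * qform B a y := by
    rw [qform_add_left, qform_smul_left]; ring
  rw [hshift]
  exact add_mem (hχ.2 y hy) (two_mul_mem_evenInts (ha.2 y hy))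

lemma inv_two_smul_sub_mem_dualOf {χ χ' : ι → ℚ} (hχ : χ ∈ CharOf B S)
    (hχ' : χ' ∈ CharOf B S) : (2⁻¹ : ℚ) • (χ' - χ) ∈ dualOf B S := by
  rw [mem_charOf_iff] at hχ hχ'
  refine ⟨Submodule.smul_mem _ _ (Submodule.sub_mem _ hχ'.1.1 hχ.1.1), fun y hy => ?_⟩
  apply isInt_of_two_mul_mem_evenInts
  have hdiff : 2 * qform B ((2⁻¹ : ℚ) • (χ' - χ)) y
      = (qform B χ' y - qform B y y) - (qform B χ y - qform B y y) := by
    rw [qform_smul_left, qform_sub_left]; ring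
  rw [hdiff]
  exact sub_mem (hχ'.2 y hy) (hχ.2 y hy)

end Lattice

section QuadraticRefinement

variable {ι : Type} [Fintype ι] [DecidableEq ι] {B : Matrix ι ι ℤ} {S : Set (ι → ℚ)}

def quadRefinement (B : Matrix ι ι ℤ) (χ a : ι → ℚ) : ℚ := qform B χ a + qform B a a

lemma qform_add_two_smul_self (hB : B.IsSymm) (χ a : ι → ℚ) :
    qform B (χ + (2 : ℚ) • a) (χ + (2 : ℚ) • a) = qform B χ χ + 4 * quadRefinement B χ a := by
  simp only [quadRefinement, qform_add_left, qform_add_right, qform_smul_left, qform_smul_right,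
    qform_comm hB a χ]
  ring

lemma quadRefinement_add (hB : B.IsSymm) (χ a a' : ι → ℚ) :
    quadRefinement B χ (a + a')
      = quadRefinement B χ a + quadRefinement B χ a' + 2 * qform B a a' := by
  simp only [quadRefinement, qform_add_left, qform_add_right, qform_comm hB a' a]
  ring

lemma quadRefinement_add_sub_mem_evenInts (hB : B.IsSymm) (hint : IntegralOn B S)
    {χ a w : ι → ℚ} (hχ : χ ∈ CharOf B S) (ha : a ∈ dualOf B S) (hw : w ∈ S) :
    quadRefinement B χ (a + w) - quadRefinement B χ a ∈ evenInts := by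
  have hexpand : quadRefinement B χ (a + w) - quadRefinement B χ a
      = (qform B χ w - qform B w w) + 2 * qform B a w + 2 * qform B w w := by
    rw [quadRefinement_add hB]; simp only [quadRefinement]; ring
  rw [hexpand]
  exact add_mem (add_mem ((mem_charOf_iff.mp hχ).2 w hw) (two_mul_mem_evenInts (ha.2 w hw)))
    (two_mul_mem_evenInts (hint w hw w hw))

end QuadraticRefinement

section TorsorIso

variable {ι : Type} [Fintype ι] [DecidableEq ι] {ι' : Type} [Fintype ι'] [DecidableEq ι']
  {B₁ : Matrix ι ι ℤ} {S₁ : Set (ι → ℚ)} {B₂ : Matrix ι' ι' ℤ} {S₂ : Set (ι' → ℚ)}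
  {Φ : (ι → ℚ) → (ι' → ℚ)} {ψ : disc B₁ S₁ ≃+ disc B₂ S₂}

lemma TorsorMapIso.exists_map_add_two_smul (hΦ : TorsorMapIso B₁ S₁ B₂ S₂ Φ ψ)
    (hS₂ : IsLat S₂) {χ a : ι → ℚ} {b : ι' → ℚ} (hχ : χ ∈ CharOf B₁ S₁)
    (ha : a ∈ dualOf B₁ S₁) (hb : b ∈ dualOf B₂ S₂)
    (hab : ψ (dmk B₁ S₁ ha) = dmk B₂ S₂ hb) :
    ∃ b' ∈ dualOf B₂ S₂, b' - b ∈ S₂ ∧ Φ (χ + (2 : ℚ) • a) = Φ χ + (2 : ℚ) • b' := by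
  have hχa := add_two_smul_mem_charOf hχ ha
  set b' := (2⁻¹ : ℚ) • (Φ (χ + (2 : ℚ) • a) - Φ χ)
  have hb' : b' ∈ dualOf B₂ S₂ := inv_two_smul_sub_mem_dualOf (hΦ.1 χ hχ) (hΦ.1 _ hχa)
  have hΦb' : Φ (χ + (2 : ℚ) • a) = Φ χ + (2 : ℚ) • b' := by
    rw [smul_smul, mul_inv_cancel₀ two_ne_zero, one_smul, add_sub_cancel]
  have hψa : ψ (dmk B₁ S₁ ha) = dmk B₂ S₂ hb' := hΦ.2.2.2 χ hχ _ hχa a b' ha hb' rfl hΦb'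
  exact ⟨b', hb', hS₂.sub_mem_of_dmk_eq hb hb' (hab.symm.trans hψa), hΦb'⟩

lemma TorsorMapIso.quadRefinement_sub_mem_evenInts (hΦ : TorsorMapIso B₁ S₁ B₂ S₂ Φ ψ)
    (hρ : RhoCompat B₁ S₁ B₂ S₂ 1 Φ) (hB₁ : B₁.IsSymm) (hB₂ : B₂.IsSymm) (hS₂ : IsLat S₂)
    (hint₂ : IntegralOn B₂ S₂) {s₁ s₂ : ℤ} (hs₁ : IsSignatureOf B₁ S₁ s₁)
    (hs₂ : IsSignatureOf B₂ S₂ s₂) {χ a : ι → ℚ} {b : ι' → ℚ} (hχ : χ ∈ CharOf B₁ S₁)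
    (ha : a ∈ dualOf B₁ S₁) (hb : b ∈ dualOf B₂ S₂)
    (hab : ψ (dmk B₁ S₁ ha) = dmk B₂ S₂ hb) :
    quadRefinement B₂ (Φ χ) b - quadRefinement B₁ χ a ∈ evenInts := by
  obtain ⟨b', hb', hb'b, hΦb'⟩ := hΦ.exists_map_add_two_smul hS₂ hχ ha hb hab
  have hρχ : _ ∈ evenInts := mem_evenInts_iff.mpr (hρ χ hχ s₁ s₂ hs₁ hs₂)
  have hρχa : _ ∈ evenInts :=
    mem_evenInts_iff.mpr (hρ _ (add_two_smul_mem_charOf hχ ha) s₁ s₂ hs₁ hs₂)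
  rw [hΦb', qform_add_two_smul_self hB₂, qform_add_two_smul_self hB₁] at hρχa
  have hshift := quadRefinement_add_sub_mem_evenInts hB₂ hint₂ (hΦ.1 χ hχ) hb hb'b
  rw [add_sub_cancel] at hshift
  -- ρ-compatibility at `χ + 2a` minus that at `χ`, corrected by the change `b' ↦ b`
  have hsplit : quadRefinement B₂ (Φ χ) b - quadRefinement B₁ χ a
      = (((qform B₂ (Φ χ) (Φ χ) + 4 * quadRefinement B₂ (Φ χ) b' - s₂) / 4
          - 1 * ((qform B₁ χ χ + 4 * quadRefinement B₁ χ a - s₁) / 4))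
        - ((qform B₂ (Φ χ) (Φ χ) - s₂) / 4 - 1 * ((qform B₁ χ χ - s₁) / 4)))
        - (quadRefinement B₂ (Φ χ) b' - quadRefinement B₂ (Φ χ) b) := by
    ring
  rw [hsplit]
  exact sub_mem (sub_mem hρχa hρχ) hshift

theorem TorsorMapIso.isInt_qform_sub_qform (hΦ : TorsorMapIso B₁ S₁ B₂ S₂ Φ ψ)
    (hρ : RhoCompat B₁ S₁ B₂ S₂ 1 Φ) (hB₁ : B₁.IsSymm) (hB₂ : B₂.IsSymm) (hS₂ : IsLat S₂)
    (hint₂ : IntegralOn B₂ S₂) {s₁ s₂ : ℤ} (hs₁ : IsSignatureOf B₁ S₁ s₁)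
    (hs₂ : IsSignatureOf B₂ S₂ s₂) {χ : ι → ℚ} (hχ : χ ∈ CharOf B₁ S₁)
    {x x' : ι → ℚ} {y y' : ι' → ℚ} (hx : x ∈ dualOf B₁ S₁) (hx' : x' ∈ dualOf B₁ S₁)
    (hy : y ∈ dualOf B₂ S₂) (hy' : y' ∈ dualOf B₂ S₂)
    (hxy : ψ (dmk B₁ S₁ hx) = dmk B₂ S₂ hy) (hxy' : ψ (dmk B₁ S₁ hx') = dmk B₂ S₂ hy') :
    isInt (qform B₂ y y' - qform B₁ x x') := by
  have hsum : ψ (dmk B₁ S₁ (add_mem hx hx')) = dmk B₂ S₂ (add_mem hy hy') := by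
    rw [show dmk B₁ S₁ (add_mem hx hx') = dmk B₁ S₁ hx + dmk B₁ S₁ hx' from rfl, map_add,
      hxy, hxy']
    rfl
  have transfer := fun {a b} ha hb hab =>
    hΦ.quadRefinement_sub_mem_evenInts hρ hB₁ hB₂ hS₂ hint₂ hs₁ hs₂ (a := a) (b := b) hχ ha hb hab
  apply isInt_of_two_mul_mem_evenInts
  have hpolar : 2 * (qform B₂ y y' - qform B₁ x x')
      = (quadRefinement B₂ (Φ χ) (y + y') - quadRefinement B₁ χ (x + x'))
        - (quadRefinement B₂ (Φ χ) y - quadRefinement B₁ χ x)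
        - (quadRefinement B₂ (Φ χ) y' - quadRefinement B₁ χ x') := by
    rw [quadRefinement_add hB₁, quadRefinement_add hB₂]; ring
  rw [hpolar]
  exact sub_mem (sub_mem (transfer _ _ hsum) (transfer hx hy hxy)) (transfer hx' hy' hxy')

end TorsorIso

lemma _root_.Matrix.IsSymm.even_dotProduct_mulVec_self_sub_diag {ι : Type} [Fintype ι]
    [DecidableEq ι] {B : Matrix ι ι ℤ} (hB : B.IsSymm) (a : ι → ℤ) :
    Even (a ⬝ᵥ B *ᵥ a - ∑ i, B i i * a i) := by
  induction a using Pi.single_induction with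
  | zero => simp
  | add f g hf hg =>
    have hgf : g ⬝ᵥ B *ᵥ f = f ⬝ᵥ B *ᵥ g := by
      rw [dotProduct_mulVec, ← mulVec_transpose, hB.eq, dotProduct_comm]
    have hexpand : (f + g) ⬝ᵥ B *ᵥ (f + g) - ∑ i, B i i * (f + g) i
        = (f ⬝ᵥ B *ᵥ f - ∑ i, B i i * f i) + (g ⬝ᵥ B *ᵥ g - ∑ i, B i i * g i)
          + 2 * (f ⬝ᵥ B *ᵥ g) := by
      simp only [mulVec_add, add_dotProduct, dotProduct_add, hgf, Pi.add_apply, mul_add,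
        Finset.sum_add_distrib]
      ring
    rw [hexpand]
    exact (hf.add hg).add (even_two_mul _)
  | single i m =>
    have hsingle : Pi.single i m ⬝ᵥ B *ᵥ Pi.single i m - ∑ j, B j j * (Pi.single i m : ι → ℤ) j
        = B i i * (m * (m - 1)) := by
      simp [mulVec_single, single_dotProduct, Pi.single_apply]
      ring
    rw [hsingle]
    exact (Int.even_mul_pred_self m).mul_left _

section IntVecs

variable {ι : Type} [Fintype ι] [DecidableEq ι] {B : Matrix ι ι ℤ}

lemma mem_intVecs_iff {x : ι → ℚ} : x ∈ intVecs ι ↔ ∃ a : ι → ℤ, x = fun i => (a i : ℚ) :=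
  ⟨fun hx => ⟨fun i => (hx i).choose, funext fun i => (hx i).choose_spec⟩,
    fun ⟨a, hxa⟩ i => ⟨a i, congrFun hxa i⟩⟩

lemma qform_intCast (B : Matrix ι ι ℤ) (a b : ι → ℤ) :
    qform B (fun i => (a i : ℚ)) (fun i => (b i : ℚ)) = ((a ⬝ᵥ B *ᵥ b : ℤ) : ℚ) := by
  simp [qform, dotProduct, mulVec]

lemma isLat_intVecs : IsLat (intVecs ι) := by
  refine ⟨fun _ => ⟨0, by simp⟩, fun x hx y hy i => ?_⟩
  obtain ⟨m, hm⟩ := hx i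
  obtain ⟨n, hn⟩ := hy i
  exact ⟨m - n, by simp [hm, hn]⟩

lemma integralOn_intVecs (B : Matrix ι ι ℤ) : IntegralOn B (intVecs ι) := by
  intro x hx y hy
  obtain ⟨a, rfl⟩ := mem_intVecs_iff.mp hx
  obtain ⟨b, rfl⟩ := mem_intVecs_iff.mp hy
  exact ⟨_, qform_intCast B a b⟩

lemma span_intVecs : Submodule.span ℚ (intVecs ι) = ⊤ := by
  refine eq_top_iff.mpr fun x _ => ?_
  rw [pi_eq_sum_univ x]
  refine Submodule.sum_mem _ fun i _ => Submodule.smul_mem _ _ (Submodule.subset_span ?_)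
  intro j
  by_cases hij : i = j
  · exact ⟨1, by simp [hij]⟩
  · exact ⟨0, by simp [hij]⟩

lemma exists_qform_eq_dotProduct (hB : B.IsSymm) (hdet : B.det ≠ 0) (d : ι → ℚ) :
    ∃ χ : ι → ℚ, ∀ y, qform B χ y = d ⬝ᵥ y := by
  set M : Matrix ι ι ℚ := B.map (Int.cast : ℤ → ℚ)
  have hM : IsUnit M.det := by
    rw [isUnit_iff_ne_zero, show M.det = ((B.det : ℤ) : ℚ) from
      (RingHom.map_det (Int.castRingHom ℚ) B).symm]
    exact_mod_cast hdet
  refine ⟨M⁻¹ *ᵥ d, fun y => ?_⟩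
  rw [qform, dotProduct_mulVec, ← mulVec_transpose, (hB.map (Int.cast : ℤ → ℚ) : Mᵀ = M),
    mulVec_mulVec, mul_nonsing_inv M hM, one_mulVec]

/-- The covector `y ↦ ∑ᵢ Bᵢᵢ yᵢ` is characteristic. -/
lemma exists_mem_charOf_intVecs (hB : B.IsSymm) (hdet : B.det ≠ 0) :
    ∃ χ, χ ∈ CharOf B (intVecs ι) := by
  obtain ⟨χ, hχ⟩ := exists_qform_eq_dotProduct hB hdet fun i => (B i i : ℚ)
  have hχint : ∀ a : ι → ℤ,
      qform B χ (fun i => (a i : ℚ)) = ((∑ i, B i i * a i : ℤ) : ℚ) := by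
    intro a; rw [hχ]; simp [dotProduct]
  refine ⟨χ, ⟨span_intVecs (ι := ι) ▸ Submodule.mem_top, fun y hy => ?_⟩, fun y hy => ?_⟩
  · obtain ⟨a, rfl⟩ := mem_intVecs_iff.mp hy
    exact ⟨_, hχint a⟩
  · obtain ⟨a, rfl⟩ := mem_intVecs_iff.mp hy
    obtain ⟨m, hm⟩ := (hB.even_dotProduct_mulVec_self_sub_diag a).two_dvd
    refine ⟨-m, ?_⟩
    rw [hχint, qform_intCast]
    have hmq : ((a ⬝ᵥ B *ᵥ a : ℤ) : ℚ) - ((∑ i, B i i * a i : ℤ) : ℚ) = 2 * m := by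
      exact_mod_cast hm
    push_cast at hmq ⊢
    linarith

end IntVecs

section Signature

variable {ι : Type} [Fintype ι] [DecidableEq ι] {B : Matrix ι ι ℤ}

lemma exists_isSignatureOf_of_orthogonal {S : Set (ι → ℚ)} {κ : Type} [Fintype κ]
    (v : κ → ι → ℚ) (hspan : Submodule.span ℚ (Set.range v) = Submodule.span ℚ S)
    (hli : LinearIndependent ℚ v) (horth : ∀ k l, k ≠ l → qform B (v k) (v l) = 0)
    (haniso : ∀ k, qform B (v k) (v k) ≠ 0) : ∃ s, IsSignatureOf B S s := by
  classical
  set P : κ → Prop := fun k => 0 < qform B (v k) (v k)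
  set p := Fintype.card {k // P k}
  set q := Fintype.card {k // ¬P k}
  let e : Fin (p + q) ≃ κ := finSumFinEquiv.symm.trans <|
    (Equiv.sumCongr (Fintype.equivFin _).symm (Fintype.equivFin _).symm).trans
      (Equiv.sumCompl P)
  refine ⟨p - q, p, q, v ∘ e, fun i => hspan ▸ Submodule.subset_span ⟨e i, rfl⟩,
    by rw [EquivLike.range_comp, hspan], hli.comp e e.injective,
    fun i j hij => horth _ _ (e.injective.ne hij), fun i => ?_, rfl⟩
  induction i using Fin.addCases with
  | left j =>
    rw [if_pos (by simp)]
    simpa [e] using ((Fintype.equivFin {k // P k}).symm j).2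
  | right j =>
    rw [if_neg (by simp)]
    have hneg : ¬P (e (Fin.natAdd p j)) := by
      simpa [e] using ((Fintype.equivFin {k // ¬P k}).symm j).2
    exact lt_of_le_of_ne (not_lt.mp hneg) (haniso _)

lemma exists_isSignatureOf_intVecs (hB : B.IsSymm) (hdet : B.det ≠ 0) :
    ∃ s, IsSignatureOf B (intVecs ι) s := by
  set β := Matrix.toBilin' (B.map (Int.cast : ℤ → ℚ))
  have hβ : ∀ x y, qform B x y = β x y := fun x y => (Matrix.toBilin'_apply' _ x y).symm
  have hβsymm : LinearMap.IsSymm β := LinearMap.isSymm_def.mpr fun x y => by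
    simpa only [RingHom.id_apply, ← hβ] using qform_comm hB x y
  have hβnd : β.Nondegenerate := by
    refine LinearMap.BilinForm.nondegenerate_toBilin'_of_det_ne_zero' _ ?_
    rw [show (B.map (Int.cast : ℤ → ℚ)).det = ((B.det : ℤ) : ℚ) from
      (RingHom.map_det (Int.castRingHom ℚ) B).symm]
    exact_mod_cast hdet
  obtain ⟨v, hv⟩ := LinearMap.BilinForm.exists_orthogonal_basis hβsymm
  refine exists_isSignatureOf_of_orthogonal v (by rw [v.span_eq, span_intVecs])
    v.linearIndependent (fun k l hkl => (hβ _ _).trans (hv hkl)) fun k => ?_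
  rw [hβ]
  exact hv.not_isOrtho_basis_self_of_separatingLeft hβnd.1 k

end Signature

/-- An isomorphism of ρ-invariants induces an isomorphism of
discriminant forms: `b₂(ψ x̄, ψ ȳ) = b₁(x̄, ȳ)` in `ℚ/ℤ`. -/
theorem stmt_3 (L₁ L₂ : IntLattice)
    (Φ : (Fin L₁.n → ℚ) → (Fin L₂.n → ℚ))
    (ψ : disc L₁.B (intVecs (Fin L₁.n)) ≃+ disc L₂.B (intVecs (Fin L₂.n)))
    (hiso : TorsorMapIso L₁.B (intVecs (Fin L₁.n)) L₂.B (intVecs (Fin L₂.n)) Φ ψ)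
    (hrho : RhoCompat L₁.B (intVecs (Fin L₁.n)) L₂.B (intVecs (Fin L₂.n)) 1 Φ) :
    ∀ (x x' : Fin L₁.n → ℚ) (y y' : Fin L₂.n → ℚ)
      (hx : x ∈ dualOf L₁.B (intVecs (Fin L₁.n)))
      (hx' : x' ∈ dualOf L₁.B (intVecs (Fin L₁.n)))
      (hy : y ∈ dualOf L₂.B (intVecs (Fin L₂.n)))
      (hy' : y' ∈ dualOf L₂.B (intVecs (Fin L₂.n))),
      ψ (dmk _ _ hx) = dmk _ _ hy → ψ (dmk _ _ hx') = dmk _ _ hy' →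
      ∃ m : ℤ, qform L₂.B y y' - qform L₁.B x x' = (m : ℚ) := by
  intro x x' y y' hx hx' hy hy' hxy hxy'
  obtain ⟨χ, hχ⟩ := exists_mem_charOf_intVecs L₁.symm L₁.nondeg
  obtain ⟨s₁, hs₁⟩ := exists_isSignatureOf_intVecs L₁.symm L₁.nondeg
  obtain ⟨s₂, hs₂⟩ := exists_isSignatureOf_intVecs L₂.symm L₂.nondeg
  exact hiso.isInt_qform_sub_qform hrho L₁.symm L₂.symm isLat_intVecs (integralOn_intVecs _)
    hs₁ hs₂ hχ hx hx' hy hy' hxy hxy'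

end Greene
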